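/- Let P = C_n be the chain on {1,...,n} and L = g^≺(P), the strictly upper triangular n×n matrices. For x = Σ_{i=1}^{n-1} E_{i,i+1}, the image of ad_x contains E_{p,q} for every non-covering relation p ≺ q (i.e., q − p ≥ 2); hence rank(ad_x) ≥ (n−1)(n−2)/2. -/

import Mathlib

/-!
Since `ad_x E_{p+1,q} = E_{p,q} - E_{p+1,q+1}` (the second term vanishing in the last column),
each `E_{p,q}` with `q - p ≥ 2` lies in the image of `ad_x`, by descending induction on `q`.
These matrix units are linearly independent and there are `(n-1)(n-2)/2` of them.
-/

/-- The matrix unit `E p q`. -/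
noncomputable def matE {n : ℕ} (p q : Fin n) : Matrix (Fin n) (Fin n) ℂ :=
  Matrix.single p q 1

attribute [local instance 100] LieRing.ofAssociativeRing

lemma LinearIndependent.fintype_card_le_finrank_of_forall_mem {K V ι : Type*} [DivisionRing K]
    [AddCommGroup V] [Module K V] [Fintype ι] {v : ι → V} (hv : LinearIndependent K v)
    {S : Submodule K V} [FiniteDimensional K S] (hS : ∀ i, v i ∈ S) :
    Fintype.card ι ≤ Module.finrank K S := by
  rw [← finrank_span_eq_card hv]
  exact Submodule.finrank_mono (Submodule.span_le.2 (Set.range_subset_iff.2 hS))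

section

open Matrix Finset

variable {n : ℕ}

lemma matE_mul_matE (a b c d : Fin n) :
    matE a b * matE c d = if b = c then matE a d else 0 := by
  split_ifs with h
  · subst h; simp [matE]
  · exact single_mul_single_of_ne (h := h) ..

variable (n) in
noncomputable def shiftMatrix : Matrix (Fin n) (Fin n) ℂ :=
  ∑ i : Fin n, if h : (i : ℕ) + 1 < n then matE i ⟨(i : ℕ) + 1, h⟩ else 0

lemma shiftMatrix_mul_matE {i a : Fin n} (h : (i : ℕ) + 1 = a) (b : Fin n) :
    shiftMatrix n * matE a b = matE i b := by
  rw [shiftMatrix, sum_mul, sum_eq_single i]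
  · rw [dif_pos (h ▸ a.isLt), matE_mul_matE, if_pos (Fin.ext h)]
  · intro j _ hji
    split_ifs
    · rw [matE_mul_matE, if_neg]
      intro e
      exact hji (Fin.ext (by have := congrArg Fin.val e; simp at this; omega))
    · exact zero_mul _
  · simp

lemma matE_mul_shiftMatrix {b c : Fin n} (a : Fin n) (h : (b : ℕ) + 1 = c) :
    matE a b * shiftMatrix n = matE a c := by
  rw [shiftMatrix, mul_sum, sum_eq_single b]
  · rw [dif_pos (h ▸ c.isLt), matE_mul_matE, if_pos rfl]
    exact congrArg _ (Fin.ext h)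
  · intro j _ hjb
    split_ifs
    · rw [matE_mul_matE, if_neg (Ne.symm hjb)]
    · exact mul_zero _
  · simp

lemma matE_mul_shiftMatrix_of_last (a : Fin n) {b : Fin n} (h : (b : ℕ) + 1 = n) :
    matE a b * shiftMatrix n = 0 := by
  rw [shiftMatrix, mul_sum]
  refine sum_eq_zero fun j _ => ?_
  split_ifs with hj
  · rw [matE_mul_matE, if_neg]
    rintro rfl
    omega
  · exact mul_zero _

variable (n) in
noncomputable def strictUpper : Submodule ℂ (Matrix (Fin n) (Fin n) ℂ) :=
  Submodule.span ℂ {m | ∃ p q : Fin n, p < q ∧ m = matE p q}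

lemma matE_mem_strictUpper {p q : Fin n} (h : p < q) : matE p q ∈ strictUpper n :=
  Submodule.subset_span ⟨p, q, h, rfl⟩

local notation "adShift" => LieAlgebra.ad ℂ (Matrix (Fin n) (Fin n) ℂ) (shiftMatrix n)

lemma matE_mem_map_ad_shiftMatrix (p q : Fin n) (hpq : (p : ℕ) + 2 ≤ q) :
    matE p q ∈ (strictUpper n).map adShift := by
  obtain ⟨k, hk⟩ : ∃ k, (q : ℕ) + k + 1 = n := ⟨n - 1 - q, by omega⟩
  induction k generalizing p q with
  | zero =>
    have hstep : adShift (matE ⟨p + 1, by omega⟩ q) = matE p q := by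
      rw [LieAlgebra.ad_apply, Ring.lie_def, shiftMatrix_mul_matE rfl,
        matE_mul_shiftMatrix_of_last _ hk, sub_zero]
    exact hstep ▸ Submodule.mem_map_of_mem (matE_mem_strictUpper (by simp [Fin.lt_def]; omega))
  | succ k ih =>
    have hstep : adShift (matE ⟨p + 1, by omega⟩ q) =
        matE p q - matE ⟨p + 1, by omega⟩ ⟨q + 1, by omega⟩ := by
      rw [LieAlgebra.ad_apply, Ring.lie_def, shiftMatrix_mul_matE rfl,
        matE_mul_shiftMatrix (c := ⟨q + 1, by omega⟩) _ rfl]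
    rw [← sub_add_cancel (matE p q) (matE ⟨p + 1, by omega⟩ ⟨q + 1, by omega⟩), ← hstep]
    exact add_mem (Submodule.mem_map_of_mem (matE_mem_strictUpper (by simp [Fin.lt_def]; omega)))
      (ih _ _ (by simp; omega) (by simp; omega))

lemma linearIndependent_matE : LinearIndependent ℂ (fun z : Fin n × Fin n => matE z.1 z.2) := by
  convert (stdBasis ℂ (Fin n) (Fin n)).linearIndependent with z
  rw [stdBasis_eq_single]; rfl

lemma card_filter_add_two_le :
    #{z : Fin n × Fin n | (z.1 : ℕ) + 2 ≤ z.2} = (n - 1) * (n - 2) / 2 := by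
  have fiber (q : Fin n) : #{p : Fin n | (p : ℕ) + 2 ≤ q} = q - 1 := by
    rw [← min_eq_right (by omega : (q : ℕ) - 1 ≤ n), ← Fin.card_filter_val_lt]
    congr 1; ext p; simp only [mem_filter, mem_univ, true_and]; omega
  have shift : ∑ j ∈ range n, (j - 1) = ∑ i ∈ range (n - 1), i := by
    cases n with
    | zero => rfl
    | succ m => simp [sum_range_succ']
  rw [card_filter, Fintype.sum_prod_type_right]
  simp only [← card_filter, fiber]
  rw [Fin.sum_univ_eq_sum_range (fun j => j - 1), shift, sum_range_id, Nat.sub_sub]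

lemma le_finrank_map_ad_shiftMatrix :
    (n - 1) * (n - 2) / 2 ≤ Module.finrank ℂ ((strictUpper n).map adShift) := by
  rw [← card_filter_add_two_le, ← Fintype.card_subtype]
  exact (linearIndependent_matE.comp Subtype.val Subtype.val_injective)
    |>.fintype_card_le_finrank_of_forall_mem fun z => matE_mem_map_ad_shiftMatrix _ _ z.2

end

/-- Let `L = g^≺(C_n)` be the strictly upper triangular `n × n` complex matrices and
`x = Σ_{i=1}^{n-1} E_{i,i+1}`.  Then the image of `ad_x : L → L` contains `E p q` for
every non-covering relation `p ≺ q` (i.e. `q − p ≥ 2`); hence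
`rank(ad_x) ≥ (n−1)(n−2)/2`. -/
theorem chain_breadth_element (n : ℕ) :
    let L : Submodule ℂ (Matrix (Fin n) (Fin n) ℂ) :=
      Submodule.span ℂ {m : Matrix (Fin n) (Fin n) ℂ | ∃ p q : Fin n, p < q ∧ m = matE p q}
    let x : Matrix (Fin n) (Fin n) ℂ :=
      ∑ i : Fin n, if h : (i : ℕ) + 1 < n then matE i ⟨(i : ℕ) + 1, h⟩ else 0
    (∀ p q : Fin n, (p : ℕ) + 2 ≤ (q : ℕ) →
        matE p q ∈ Submodule.map (LieAlgebra.ad ℂ (Matrix (Fin n) (Fin n) ℂ) x) L) ∧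
      (n - 1) * (n - 2) / 2 ≤
        Module.finrank ℂ
          ↥(Submodule.map (LieAlgebra.ad ℂ (Matrix (Fin n) (Fin n) ℂ) x) L) :=
  ⟨matE_mem_map_ad_shiftMatrix, le_finrank_map_ad_shiftMatrix⟩
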